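/- Let ε > 0 and let f : ℝ → ℝ be a function satisfying |f(x + y) − f(x) − f(y)| ≤ ε for all x, y ∈ ℝ, and such that the mapping x ↦ f(ln(x)) − (1/x)·f(x) is locally bounded on (0, ∞). Then there exist a real number λ and a real derivation χ : ℝ → ℝ such that |f(x) − (χ(x) + λ·x)| ≤ ε for all x ∈ ℝ. -/

import Mathlib

/-! Hyers' theorem gives an additive `a` with `|f - a| ≤ ε`, namely `a x = lim f (2ⁿ x) / 2ⁿ`.
The log-defect `h x = a (log x) - a x / x` differs from that of `f` by at most `ε + ε / x`, so it is
locally bounded on `(0, ∞)` as well. For fixed `y > 0` the Leibniz defect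
`x ↦ a (x y) - x a y - y a x` is additive and equals `x y (h x + h y - h (x y))`, hence is bounded
near `1`, hence linear: `a (x y) = x a y + y a x - a 1 x y`. So `χ = a - a 1 • id` is a derivation,
and `l = a 1`. -/

open Real Set

/-- A function `φ` is locally bounded on a set `s` if every point of `s` has a
neighborhood (within `s`) on which `φ` is bounded. -/
def LocallyBoundedOn (φ : ℝ → ℝ) (s : Set ℝ) : Prop :=
  ∀ x ∈ s, ∃ C : ℝ, ∀ᶠ y in nhdsWithin x s, |φ y| ≤ C

/-- A real-valued function is *regular* on its domain `s` if it is locally bounded,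
or continuous, or Lebesgue measurable on `s`. -/
def RegularOn (φ : ℝ → ℝ) (s : Set ℝ) : Prop :=
  LocallyBoundedOn φ s ∨ ContinuousOn φ s ∨ Measurable (s.restrict φ)

/-- A real derivation: an additive function satisfying the Leibniz rule. -/
def IsRealDerivation (χ : ℝ → ℝ) : Prop :=
  (∀ x y : ℝ, χ (x + y) = χ x + χ y) ∧ (∀ x y : ℝ, χ (x * y) = x * χ y + y * χ x)

open Filter Topology Metric

section Hyers

variable {G E : Type*} [AddCommMonoid G] [NormedAddCommGroup E] [NormedSpace ℝ E]
  {f : G → E} {ε : ℝ}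

theorem dist_two_pow_inv_smul_succ_le (hf : ∀ x y, ‖f (x + y) - f x - f y‖ ≤ ε) (x : G) (n : ℕ) :
    dist ((2 ^ n : ℝ)⁻¹ • f (2 ^ n • x)) ((2 ^ (n + 1) : ℝ)⁻¹ • f (2 ^ (n + 1) • x)) ≤
      ε / 2 / 2 ^ n := by
  set t := 2 ^ n • x
  have ht : 2 ^ (n + 1) • x = t + t := by rw [pow_succ, mul_nsmul, two_nsmul]
  have hsplit : (2 ^ n : ℝ)⁻¹ • f t - (2 ^ (n + 1) : ℝ)⁻¹ • f (t + t) =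
      -(2 ^ (n + 1) : ℝ)⁻¹ • (f (t + t) - f t - f t) := by
    rw [pow_succ]; module
  rw [dist_eq_norm, ht, hsplit, norm_smul, norm_neg, norm_inv, norm_pow, Real.norm_two,
    inv_mul_le_iff₀ (by positivity)]
  calc ‖f (t + t) - f t - f t‖ ≤ ε := hf t t
    _ = 2 ^ (n + 1) * (ε / 2 / 2 ^ n) := by field_simp; ring

variable [CompleteSpace E]

theorem exists_addMonoidHom_norm_sub_le (hf : ∀ x y, ‖f (x + y) - f x - f y‖ ≤ ε) :
    ∃ a : G →+ E, ∀ x, ‖f x - a x‖ ≤ ε := by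
  set u : G → ℕ → E := fun x n => (2 ^ n : ℝ)⁻¹ • f (2 ^ n • x)
  have hu : ∀ x n, dist (u x n) (u x (n + 1)) ≤ ε / 2 / 2 ^ n := dist_two_pow_inv_smul_succ_le hf
  choose a ha using fun x => cauchySeq_tendsto_of_complete (cauchySeq_of_le_geometric_two (hu x))
  have hadd : ∀ x y, a (x + y) = a x + a y := by
    intro x y
    have hdefect : ∀ n, ‖u (x + y) n - (u x n + u y n)‖ ≤ ε / 2 ^ n := by
      intro n
      rw [show u (x + y) n - (u x n + u y n) = (2 ^ n : ℝ)⁻¹ •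
          (f (2 ^ n • x + 2 ^ n • y) - f (2 ^ n • x) - f (2 ^ n • y)) by
        simp only [u, nsmul_add]; module, norm_smul, norm_inv, norm_pow, Real.norm_two,
        inv_mul_le_iff₀ (by positivity), mul_div_cancel₀ _ (by positivity)]
      exact hf _ _
    have hlim : Tendsto (fun n => u (x + y) n - (u x n + u y n)) atTop (𝓝 0) :=
      squeeze_zero_norm hdefect ((tendsto_pow_atTop_atTop_of_one_lt one_lt_two).const_div_atTop ε)
    rw [← sub_eq_zero]
    exact tendsto_nhds_unique ((ha (x + y)).sub ((ha x).add (ha y))) hlim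
  refine ⟨AddMonoidHom.mk' a hadd, fun x => ?_⟩
  simpa [u, dist_eq_norm] using dist_le_of_le_geometric_two_of_tendsto₀ (hu x) (ha x)

end Hyers

theorem AddMonoidHom.continuous_of_eventually_norm_le {G H : Type*} [SeminormedAddCommGroup G]
    [SeminormedAddCommGroup H] [NormedSpace ℝ H] (g : G →+ H) {x₀ : G} {C : ℝ}
    (hb : ∀ᶠ x in 𝓝 x₀, ‖g x‖ ≤ C) : Continuous g := by
  have hs : (· + x₀) ⁻¹' {x | ‖g x‖ ≤ C} ∈ 𝓝 (0 : G) :=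
    (continuous_add_const x₀).tendsto' 0 x₀ (zero_add x₀) hb
  refine g.continuous_of_isBounded_nhds_zero hs (isBounded_closedBall (x := 0) (r := C + ‖g x₀‖)
    |>.subset ?_)
  rintro _ ⟨x, hx, rfl⟩
  rw [mem_closedBall_zero_iff, ← add_sub_cancel_right x x₀, map_sub]
  exact (norm_sub_le _ _).trans (by gcongr; exact hx)

theorem AddMonoidHom.eq_mul_of_eventually_abs_le (g : ℝ →+ ℝ) {x₀ C : ℝ}
    (hb : ∀ᶠ x in 𝓝 x₀, |g x| ≤ C) (x : ℝ) : g x = x * g 1 := by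
  simpa using map_real_smul g (g.continuous_of_eventually_norm_le hb) x 1

theorem LocallyBoundedOn.of_abs_sub_le {φ ψ b : ℝ → ℝ} {s : Set ℝ} (hφ : LocallyBoundedOn φ s)
    (hb : ContinuousOn b s) (hψ : ∀ x ∈ s, |ψ x - φ x| ≤ b x) : LocallyBoundedOn ψ s := by
  intro x hx
  obtain ⟨C, hC⟩ := hφ x hx
  refine ⟨C + (b x + 1), ?_⟩
  filter_upwards [hC, (hb x hx).eventually_lt continuousWithinAt_const (lt_add_one (b x)),
    self_mem_nhdsWithin] with y hφy hby hy
  linarith [abs_sub_abs_le_abs_sub (ψ y) (φ y), hψ y hy]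

theorem LocallyBoundedOn.eventually_abs_le {φ : ℝ → ℝ} {s : Set ℝ} (hφ : LocallyBoundedOn φ s)
    (hs : IsOpen s) {x : ℝ} (hx : x ∈ s) : ∃ C, ∀ᶠ y in 𝓝 x, |φ y| ≤ C := by
  simpa only [hs.nhdsWithin_eq hx] using hφ x hx

noncomputable def logDefect (a : ℝ → ℝ) (x : ℝ) : ℝ := a (Real.log x) - 1 / x * a x

theorem abs_logDefect_sub_le {f a : ℝ → ℝ} {ε : ℝ} (hfa : ∀ x, |f x - a x| ≤ ε) {x : ℝ}
    (hx : 0 < x) : |logDefect a x - logDefect f x| ≤ ε + ε / x := by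
  have hsplit : logDefect a x - logDefect f x = (a (log x) - f (log x)) + (f x - a x) / x := by
    simp only [logDefect]; ring
  rw [hsplit]
  refine (abs_add_le _ _).trans (add_le_add ?_ ?_)
  · rw [abs_sub_comm]
    exact hfa _
  · rw [abs_div, abs_of_pos hx]
    gcongr
    exact hfa x

def leibnizDefect (a : ℝ →+ ℝ) (y : ℝ) : ℝ →+ ℝ :=
  a.comp (AddMonoidHom.mulRight y) - AddMonoidHom.mulRight (a y) - y • a

theorem leibnizDefect_apply (a : ℝ →+ ℝ) (y x : ℝ) :
    leibnizDefect a y x = a (x * y) - x * a y - y * a x := by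
  simp [leibnizDefect]

theorem leibnizDefect_eq_logDefect (a : ℝ →+ ℝ) {x y : ℝ} (hx : 0 < x) (hy : 0 < y) :
    leibnizDefect a y x = x * y * (logDefect a x + logDefect a y - logDefect a (x * y)) := by
  simp only [leibnizDefect_apply, logDefect, Real.log_mul hx.ne' hy.ne', map_add]
  field_simp
  ring

theorem map_mul_eq_of_locallyBoundedOn_logDefect (a : ℝ →+ ℝ)
    (ha : LocallyBoundedOn (logDefect a) (Ioi 0)) {y : ℝ} (hy : 0 < y) (x : ℝ) :
    a (x * y) = x * a y + y * a x - a 1 * (x * y) := by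
  obtain ⟨C₁, hC₁⟩ := ha.eventually_abs_le isOpen_Ioi (mem_Ioi.2 one_pos)
  obtain ⟨C₂, hC₂⟩ := ha.eventually_abs_le isOpen_Ioi (mem_Ioi.2 hy)
  have hC₂' : ∀ᶠ x in 𝓝 1, |logDefect a (x * y)| ≤ C₂ :=
    (continuous_mul_const y).tendsto' 1 y (one_mul y) hC₂
  have hbound : ∀ᶠ x in 𝓝 1, |leibnizDefect a y x| ≤ 2 * y * (C₁ + |logDefect a y| + C₂) := by
    filter_upwards [hC₁, hC₂', Ioo_mem_nhds zero_lt_one one_lt_two] with x hx hxy ⟨hx0, hx2⟩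
    rw [leibnizDefect_eq_logDefect a hx0 hy, abs_mul, abs_of_pos (by positivity)]
    have hsum : |logDefect a x + logDefect a y - logDefect a (x * y)| ≤
        C₁ + |logDefect a y| + C₂ :=
      (abs_sub _ _).trans (add_le_add ((abs_add_le _ _).trans (by gcongr)) hxy)
    exact mul_le_mul (by nlinarith) hsum (abs_nonneg _) (by positivity)
  have hlinear := (leibnizDefect a y).eq_mul_of_eventually_abs_le hbound x
  rw [leibnizDefect_apply, leibnizDefect_apply, one_mul] at hlinear
  linarith

theorem isRealDerivation_sub_mul (a : ℝ →+ ℝ)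
    (h : ∀ x y, 0 < y → a (x * y) = x * a y + y * a x - a 1 * (x * y)) :
    IsRealDerivation (fun x => a x - a 1 * x) := by
  have hleibniz : ∀ x y, a (x * y) = x * a y + y * a x - a 1 * (x * y) := by
    intro x y
    rcases lt_trichotomy y 0 with hy | rfl | hy
    · have := h x (-y) (neg_pos.2 hy)
      simp only [mul_neg, map_neg] at this
      linarith
    · simp
    · exact h x y hy
  refine ⟨fun x y => by simp only [map_add]; ring, fun x y => by beta_reduce; rw [hleibniz]; ring⟩

theorem stmt_17_general (ε : ℝ) (f : ℝ → ℝ)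
    (hf : ∀ x y : ℝ, |f (x + y) - f x - f y| ≤ ε)
    (hlb : LocallyBoundedOn (fun x : ℝ => f (Real.log x) - (1 / x) * f x) (Set.Ioi 0)) :
    ∃ (l : ℝ) (χ : ℝ → ℝ), IsRealDerivation χ ∧
      ∀ x : ℝ, |f x - (χ x + l * x)| ≤ ε := by
  obtain ⟨a, ha⟩ := exists_addMonoidHom_norm_sub_le (f := f) hf
  have hloga : LocallyBoundedOn (logDefect a) (Ioi 0) :=
    LocallyBoundedOn.of_abs_sub_le (φ := logDefect f) hlb
      (continuousOn_const.add (continuousOn_const.div continuousOn_id fun x hx => ne_of_gt hx))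
      fun x hx => abs_logDefect_sub_le ha hx
  refine ⟨a 1, fun x => a x - a 1 * x, isRealDerivation_sub_mul a fun x y hy =>
    map_mul_eq_of_locallyBoundedOn_logDefect a hloga hy x, fun x => by simpa using ha x⟩

theorem stmt_17 (ε : ℝ) (hε : 0 < ε) (f : ℝ → ℝ)
    (hf : ∀ x y : ℝ, |f (x + y) - f x - f y| ≤ ε)
    (hlb : LocallyBoundedOn (fun x : ℝ => f (Real.log x) - (1 / x) * f x) (Set.Ioi 0)) :
    ∃ (l : ℝ) (χ : ℝ → ℝ), IsRealDerivation χ ∧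
      ∀ x : ℝ, |f x - (χ x + l * x)| ≤ ε :=
  stmt_17_general ε f hf hlb
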